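/- arXiv:1401.0474 — 3 statements merged into one kernel-verified Lean document; each statement's English description precedes it below -/
import Mathlib

section
/- The 2×2 L-operator L(x) with entries L_{11}(x)=q^{H/2}-q^{-1}x q^{-H/2}, L_{12}(x)=(q-q^{-1})F q^{-H/2}, L_{21}(x)=(q-q^{-1})x E q^{H/2}, L_{22}(x)=q^{-H/2}-q^{-1}x q^{H/2}, over U_q(sl_2), satisfies the quantum determinant identity: L_{11}(x)L_{22}(q^{-2}x) - q^{-1}L_{21}(x)L_{12}(q^{-2}x) = 1 - q^{-2}(q-q^{-1})^2 C^{(l)} x + q^{-4}x^2, where C^{(l)} = EF + (q^{H-1}+q^{-H+1})/(q-q^{-1})^2. -/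
/-!
The identity is a direct computation. Using `k k⁻¹ = k⁻¹ k = 1`, the product of the diagonal
entries is `1 - q⁻³x k² - q⁻¹x k⁻² + q⁻⁴x²`, and commuting `k` past `F` turns the product of the
off-diagonal entries into a multiple of `EF`; the two `k^{±2}` terms are exactly the Cartan part of
`C⁽ˡ⁾`.
-/

theorem sub_inv_ne_zero_of_sq_ne_one {K : Type*} [Field K] {q : K} (hq : q ≠ 0)
    (hq2 : q ^ 2 ≠ 1) : q - q⁻¹ ≠ 0 := by
  rw [sub_ne_zero]
  contrapose! hq2
  field_simp at hq2
  exact hq2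

section UnitCommutation

variable {K A : Type*} [Field K] [Ring A] [Algebra K A] {k kinv : A}

theorem sub_smul_mul_sub_smul_of_mul_eq_one (hk : k * kinv = 1) (hk' : kinv * k = 1) (a b : K) :
    (k - a • kinv) * (kinv - b • k) = 1 - b • k ^ 2 - a • kinv ^ 2 + (a * b) • (1 : A) := by
  simp only [mul_sub, sub_mul, smul_mul_assoc, mul_smul_comm, smul_sub, smul_smul, hk, hk', sq]
  rw [mul_comm b a]
  abel

theorem mul_mul_inv_eq_smul_of_mul_eq_smul {c : K} {F : A} (hk : k * kinv = 1)
    (hkF : k * F = c • (F * k)) : k * F * kinv = c • F := by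
  rw [hkF, smul_mul_assoc, mul_assoc, hk, mul_one]

theorem smul_mul_smul_mul_inv_eq_smul_mul {c : K} {E F : A} (hk : k * kinv = 1)
    (hkF : k * F = c • (F * k)) (a b : K) :
    (a • (E * k)) * (b • (F * kinv)) = (a * b * c) • (E * F) := by
  have hconj := mul_mul_inv_eq_smul_of_mul_eq_smul hk hkF
  calc (a • (E * k)) * (b • (F * kinv)) = (a * b) • (E * (k * F * kinv)) := by
        simp only [smul_mul_smul, mul_assoc]
    _ = (a * b * c) • (E * F) := by rw [hconj, mul_smul_comm, smul_smul]

end UnitCommutation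

theorem stmt6_general {K : Type*} [Field K] {A : Type*} [Ring A] [Algebra K A]
    (q : K) (hq : q ≠ 0) (hq2 : q ^ 2 ≠ 1)
    (E F k kinv : A)
    (hk : k * kinv = 1) (hk' : kinv * k = 1)
    (hkF : k * F = q⁻¹ • (F * k))
    (Cl : A)
    (hCl : Cl = E * F + ((q - q⁻¹) ^ 2)⁻¹ • (q⁻¹ • k ^ 2 + q • kinv ^ 2))
    (L : K → Matrix (Fin 2) (Fin 2) A)
    (hL : ∀ x : K, L x =
      !![k - (q⁻¹ * x) • kinv, (q - q⁻¹) • (F * kinv);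
         ((q - q⁻¹) * x) • (E * k), kinv - (q⁻¹ * x) • k]) :
    ∀ x : K,
      L x 0 0 * L (q⁻¹ ^ 2 * x) 1 1 - q⁻¹ • (L x 1 0 * L (q⁻¹ ^ 2 * x) 0 1)
        = (1 : A) - (q⁻¹ ^ 2 * (q - q⁻¹) ^ 2 * x) • Cl + (q⁻¹ ^ 4 * x ^ 2) • (1 : A) := by
  intro x
  have hlam := sub_inv_ne_zero_of_sq_ne_one hq hq2
  simp only [hL, Matrix.of_apply, Matrix.cons_val', Matrix.cons_val_zero, Matrix.cons_val_one,
    Matrix.empty_val', Matrix.cons_val_fin_one]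
  rw [sub_smul_mul_sub_smul_of_mul_eq_one hk hk', smul_mul_smul_mul_inv_eq_smul_mul hk hkF, hCl]
  simp only [smul_add, smul_smul]
  match_scalars <;> field_simp

/-- the L-operator
`L(x) = [[q^{H/2} - q⁻¹x q^{-H/2}, λF q^{-H/2}], [λxE q^{H/2}, q^{-H/2} - q⁻¹x q^{H/2}]]`
over U_q(sl₂) satisfies the quantum determinant identity
`L₁₁(x)L₂₂(q⁻²x) - q⁻¹ L₂₁(x)L₁₂(q⁻²x) = 1 - q⁻²λ² C⁽ˡ⁾ x + q⁻⁴x²`,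
where `λ = q - q⁻¹`, `k` denotes the invertible element `q^{H/2}` (so `q^H = k²`),
and `C⁽ˡ⁾ = EF + (q^{H-1} + q^{-H+1})/λ²`. -/
theorem stmt6 {K : Type*} [Field K] {A : Type*} [Ring A] [Algebra K A]
    (q : K) (hq : q ≠ 0) (hq2 : q ^ 2 ≠ 1)
    (E F k kinv : A)
    (hk : k * kinv = 1) (hk' : kinv * k = 1)
    (hkE : k * E = q • (E * k)) (hkF : k * F = q⁻¹ • (F * k))
    (hEF : E * F - F * E = (q - q⁻¹)⁻¹ • (k ^ 2 - kinv ^ 2))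
    (Cl : A)
    (hCl : Cl = E * F + ((q - q⁻¹) ^ 2)⁻¹ • (q⁻¹ • k ^ 2 + q • kinv ^ 2))
    (L : K → Matrix (Fin 2) (Fin 2) A)
    (hL : ∀ x : K, L x =
      !![k - (q⁻¹ * x) • kinv, (q - q⁻¹) • (F * kinv);
         ((q - q⁻¹) * x) • (E * k), kinv - (q⁻¹ * x) • k]) :
    ∀ x : K,
      L x 0 0 * L (q⁻¹ ^ 2 * x) 1 1 - q⁻¹ • (L x 1 0 * L (q⁻¹ ^ 2 * x) 0 1)
        = (1 : A) - (q⁻¹ ^ 2 * (q - q⁻¹) ^ 2 * x) • Cl + (q⁻¹ ^ 4 * x ^ 2) • (1 : A) :=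
  stmt6_general q hq hq2 E F k kinv hk hk' hkF Cl hCl L hL
end

section
/- The q-exponential satisfies the Hadamard-type formula: for elements A, B of an associative algebra (over a field where (k)_q! are invertible), exp_q(A)·B·exp_q(A)^{-1} = Σ_{k≥0} B_k/(k)_q!, where B_0 = B and B_{k+1} = A B_k - q^k B_k A, whenever both sides are well-defined (e.g., A is nilpotent, or as an identity of formal power series in a parameter multiplying A). -/
/-!
Let `α_i = 1/(i)_q!` be the coefficients of `exp_q` and `β_j = (-1)^j q^(j(j-1)/2)/(j)_q!`.
They satisfy `(i+1)_q α_{i+1} = α_i` and `(j+1)_q β_{j+1} = -q^j β_j`, so splitting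
`(k+1)_q = (i)_q + q^i (j)_q` over `i + j = k + 1` shows that the degree-`k` part
`S_k = Σ_{i+j=k} α_i β_j a^i b a^j` of `exp_q(a) b (Σ_j β_j a^j)` obeys
`a S_k - q^k S_k a = (k+1)_q S_{k+1}`; hence `B_k = (k)_q! S_k`. In `K` itself, with `a = b = 1`,
the same recursion reads `(1 - q^k) S_k = (k+1)_q S_{k+1}` and forces `S_k = 0` for `k ≥ 1`, so
`Σ_j β_j a^j` is a right inverse of `exp_q(a)`, hence equal to `c`, and summing `S_k` over `k`
gives the formula.
-/

/-- `(k)_q = (1-q^k)/(1-q)`. -/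
def stmt10.qnum {K : Type*} [Field K] (q : K) (k : ℕ) : K := (1 - q ^ k) / (1 - q)

/-- `(k)_q! = (1)_q (2)_q ⋯ (k)_q`. -/
def stmt10.qfact {K : Type*} [Field K] (q : K) (k : ℕ) : K :=
  ∏ i ∈ Finset.range k, stmt10.qnum q (i + 1)

/-- The q-exponential `exp_q(a) = Σ_k a^k/(k)_q!` of a nilpotent element `a` with
`a^N = 0` (the series terminates at `N`). -/
noncomputable def stmt10.expq {K : Type*} [Field K] {A : Type*} [Ring A] [Algebra K A]
    (q : K) (N : ℕ) (a : A) : A :=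
  ∑ k ∈ Finset.range N, (stmt10.qfact q k)⁻¹ • a ^ k

/-- The iterated q-commutators: `B₀ = b`, `B_{k+1} = [a, B_k]_{q^k} = a B_k - q^k B_k a`. -/
def stmt10.Bseq {K : Type*} [Field K] {A : Type*} [Ring A] [Algebra K A]
    (q : K) (a b : A) : ℕ → A
  | 0 => b
  | k + 1 => a * stmt10.Bseq q a b k - q ^ k • (stmt10.Bseq q a b k * a)

namespace stmt10

open Finset

section QNumbers

variable {K : Type*} [Field K] {q : K}

lemma qnum_zero (q : K) : qnum q 0 = 0 := by
  simp [qnum]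

lemma qnum_add (q : K) (m n : ℕ) : qnum q (m + n) = qnum q m + q ^ m * qnum q n := by
  simp only [qnum, ← mul_div_assoc, ← add_div, pow_add]
  ring

lemma qnum_succ_ne_zero (hq : ∀ k : ℕ, 1 ≤ k → q ^ k ≠ 1) (k : ℕ) : qnum q (k + 1) ≠ 0 :=
  div_ne_zero (sub_ne_zero.2 (hq (k + 1) k.succ_pos).symm)
    (sub_ne_zero.2 (by simpa using (hq 1 le_rfl).symm))

lemma qfact_zero (q : K) : qfact q 0 = 1 :=
  prod_range_zero _

lemma qfact_succ (q : K) (k : ℕ) : qfact q (k + 1) = qfact q k * qnum q (k + 1) :=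
  prod_range_succ _ _

lemma qfact_ne_zero (hq : ∀ k, qnum q (k + 1) ≠ 0) (k : ℕ) : qfact q k ≠ 0 :=
  prod_ne_zero_iff.2 fun i _ => hq i

lemma qnum_mul_inv_qfact_succ (hq : ∀ k, qnum q (k + 1) ≠ 0) (k : ℕ) :
    qnum q (k + 1) * (qfact q (k + 1))⁻¹ = (qfact q k)⁻¹ := by
  rw [qfact_succ, mul_inv, mul_left_comm, mul_inv_cancel₀ (hq k), mul_one]

def expqInvCoeff (q : K) (j : ℕ) : K :=
  (-1) ^ j * q ^ j.choose 2 * (qfact q j)⁻¹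

lemma qnum_mul_expqInvCoeff_succ (hq : ∀ k, qnum q (k + 1) ≠ 0) (j : ℕ) :
    qnum q (j + 1) * expqInvCoeff q (j + 1) = -(q ^ j * expqInvCoeff q j) := by
  have := hq j
  rw [expqInvCoeff, expqInvCoeff, qfact_succ, mul_inv, Nat.choose_succ_succ',
    Nat.choose_one_right, pow_add, pow_succ]
  field_simp
  ring

end QNumbers

lemma sum_product_range_eq_sum_antidiagonal {M : Type*} [AddCommMonoid M] {N : ℕ}
    {f : ℕ × ℕ → M} (hf : ∀ p : ℕ × ℕ, N ≤ p.1 ∨ N ≤ p.2 → f p = 0) :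
    ∑ p ∈ range N ×ˢ range N, f p = ∑ k ∈ range (2 * N), ∑ p ∈ antidiagonal k, f p := by
  rw [← sum_fiberwise_of_maps_to (g := fun p => p.1 + p.2) (t := range (2 * N))]
  · refine sum_congr rfl fun k _ => sum_subset (fun p hp => ?_) (fun p hp hp' => hf p ?_)
    · simp only [mem_filter] at hp
      exact HasAntidiagonal.mem_antidiagonal.2 hp.2
    · simp only [mem_filter, mem_product, mem_range, HasAntidiagonal.mem_antidiagonal] at hp hp'
      omega
  · intro p hp
    simp only [mem_product, mem_range] at hp ⊢
    omega

section Sandwich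

variable {R : Type*} [CommSemiring R] {A : Type*} [Semiring A] [Algebra R A]

def sandwich (α β : ℕ → R) (a b : A) (k : ℕ) : A :=
  ∑ p ∈ antidiagonal k, (α p.1 * β p.2) • (a ^ p.1 * b * a ^ p.2)

lemma sandwich_eq_zero_of_le {α β : ℕ → R} {a : A} {N k : ℕ} (hN : a ^ N = 0) (b : A)
    (hk : 2 * N ≤ k) : sandwich α β a b k = 0 := by
  refine sum_eq_zero fun p hp => ?_
  rw [HasAntidiagonal.mem_antidiagonal] at hp
  rcases le_or_gt N p.1 with h | h
  · rw [pow_eq_zero_of_le h hN, zero_mul, zero_mul, smul_zero]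
  · rw [pow_eq_zero_of_le (by omega : N ≤ p.2) hN, mul_zero, smul_zero]

lemma sandwich_one (α β : ℕ → R) (a : A) (k : ℕ) :
    sandwich α β a 1 k = (∑ p ∈ antidiagonal k, α p.1 * β p.2) • a ^ k := by
  rw [sandwich, sum_smul]
  refine sum_congr rfl fun p hp => ?_
  rw [mul_one, ← pow_add, HasAntidiagonal.mem_antidiagonal.1 hp]

lemma sum_sandwich {a : A} {N : ℕ} (hN : a ^ N = 0) (α β : ℕ → R) (b : A) :
    ∑ k ∈ range (2 * N), sandwich α β a b k
      = (∑ i ∈ range N, α i • a ^ i) * b * ∑ j ∈ range N, β j • a ^ j := by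
  have hterm : ∀ i j : ℕ, (α i • a ^ i) * b * (β j • a ^ j) = (α i * β j) • (a ^ i * b * a ^ j) :=
    fun i j => by rw [smul_mul_assoc, smul_mul_assoc, mul_smul_comm, smul_smul]
  rw [sum_mul, sum_mul_sum, ← sum_product']
  simp only [hterm]
  refine (sum_product_range_eq_sum_antidiagonal fun p hp => ?_).symm
  rcases hp with h | h <;> simp [pow_eq_zero_of_le h hN]

end Sandwich

section QCommutator

variable {K : Type*} [Field K] {q : K} {A : Type*} [Ring A] [Algebra K A]
  {α β : ℕ → K}

lemma sandwich_qcommutator (hα : ∀ i, qnum q (i + 1) * α (i + 1) = α i)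
    (hβ : ∀ j, qnum q (j + 1) * β (j + 1) = -(q ^ j * β j)) (a b : A) (k : ℕ) :
    a * sandwich α β a b k - q ^ k • (sandwich α β a b k * a)
      = qnum q (k + 1) • sandwich α β a b (k + 1) := by
  have hleft : qnum q (k + 1) • sandwich α β a b (k + 1)
      = ∑ p ∈ antidiagonal (k + 1), (qnum q p.1 * α p.1 * β p.2) • (a ^ p.1 * b * a ^ p.2)
        + ∑ p ∈ antidiagonal (k + 1),
            (q ^ p.1 * (qnum q p.2 * β p.2) * α p.1) • (a ^ p.1 * b * a ^ p.2) := by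
    rw [sandwich, smul_sum, ← sum_add_distrib]
    refine sum_congr rfl fun p hp => ?_
    rw [smul_smul, ← add_smul, ← HasAntidiagonal.mem_antidiagonal.1 hp, qnum_add]
    congr 1
    ring
  rw [hleft, Nat.sum_antidiagonal_succ, Nat.sum_antidiagonal_succ', qnum_zero]
  simp only [zero_mul, mul_zero, zero_smul, zero_add, hα, hβ]
  rw [sub_eq_add_neg, sandwich, mul_sum, sum_mul, smul_sum, ← sum_neg_distrib]
  congr 1 <;> refine sum_congr rfl fun p hp => ?_
  · rw [mul_smul_comm, pow_succ', mul_assoc, mul_assoc, mul_assoc]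
  · rw [← HasAntidiagonal.mem_antidiagonal.1 hp, smul_mul_assoc, smul_smul, ← neg_smul, pow_succ,
      mul_assoc (a ^ p.1 * b), pow_add]
    congr 1
    ring

lemma Bseq_eq_qfact_smul_sandwich (hα : ∀ i, qnum q (i + 1) * α (i + 1) = α i)
    (hβ : ∀ j, qnum q (j + 1) * β (j + 1) = -(q ^ j * β j)) (h0 : α 0 * β 0 = 1) (a b : A)
    (k : ℕ) : Bseq q a b k = qfact q k • sandwich α β a b k := by
  induction k with
  | zero => simp [Bseq, qfact_zero, sandwich, h0]
  | succ k ih =>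
    rw [Bseq, ih, mul_smul_comm, smul_mul_assoc, smul_comm (q ^ k), ← smul_sub,
      sandwich_qcommutator hα hβ, smul_smul, ← qfact_succ]

lemma sum_antidiagonal_mul_eq_zero (hq : ∀ k, qnum q (k + 1) ≠ 0)
    (hα : ∀ i, qnum q (i + 1) * α (i + 1) = α i)
    (hβ : ∀ j, qnum q (j + 1) * β (j + 1) = -(q ^ j * β j)) (k : ℕ) :
    ∑ p ∈ antidiagonal (k + 1), α p.1 * β p.2 = 0 := by
  have hrec : ∀ n, qnum q (n + 1) * ∑ p ∈ antidiagonal (n + 1), α p.1 * β p.2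
      = (1 - q ^ n) * ∑ p ∈ antidiagonal n, α p.1 * β p.2 := fun n => by
    have h := sandwich_qcommutator (A := K) hα hβ 1 1 n
    simp only [sandwich_one, one_pow, smul_eq_mul, mul_one, one_mul] at h
    rw [← h]
    ring
  induction k with
  | zero => simpa [hq 0] using hrec 0
  | succ k ih =>
    exact (mul_eq_zero.1 ((hrec (k + 1)).trans (by rw [ih, mul_zero]))).resolve_left (hq (k + 1))

lemma sum_smul_pow_mul_sum_smul_pow_eq_one (hq : ∀ k, qnum q (k + 1) ≠ 0)
    (hα : ∀ i, qnum q (i + 1) * α (i + 1) = α i)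
    (hβ : ∀ j, qnum q (j + 1) * β (j + 1) = -(q ^ j * β j)) (h0 : α 0 * β 0 = 1)
    {a : A} {N : ℕ} (hN : a ^ N = 0) :
    (∑ i ∈ range N, α i • a ^ i) * ∑ j ∈ range N, β j • a ^ j = 1 := by
  rcases N.eq_zero_or_pos with rfl | hN0
  · exact eq_of_zero_eq_one (by simpa using hN.symm) _ _
  rw [← mul_one (∑ i ∈ range N, α i • a ^ i), ← sum_sandwich hN, sum_eq_single 0]
  · simp [sandwich_one, h0]
  · intro k _ hk
    obtain ⟨k, rfl⟩ := Nat.exists_eq_succ_of_ne_zero hk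
    rw [sandwich_one, sum_antidiagonal_mul_eq_zero hq hα hβ, zero_smul]
  · intro h
    exact absurd (mem_range.2 (by omega)) h

end QCommutator

end stmt10

/-- q-analogue of the Hadamard formula: if `a` is nilpotent
(`a^N = 0`) and `c` is the (two-sided) inverse of `exp_q(a)`, then
`exp_q(a)·b·exp_q(a)⁻¹ = Σ_{k≥0} B_k/(k)_q!`, the sum on the right being finite
since `B_k = 0` for `k ≥ 2N`. -/
theorem stmt10 {K : Type*} [Field K] {A : Type*} [Ring A] [Algebra K A]
    (q : K) (hq : ∀ k : ℕ, 1 ≤ k → q ^ k ≠ 1)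
    (a b c : A) (N : ℕ) (hN : a ^ N = 0)
    (hc : stmt10.expq q N a * c = 1) (hc' : c * stmt10.expq q N a = 1) :
    (∀ k, 2 * N ≤ k → stmt10.Bseq q a b k = 0) ∧
    stmt10.expq q N a * b * c
      = ∑ k ∈ Finset.range (2 * N), (stmt10.qfact q k)⁻¹ • stmt10.Bseq q a b k := by
  open stmt10 in
  have hq' := qnum_succ_ne_zero hq
  have hα := qnum_mul_inv_qfact_succ hq'
  have hβ := qnum_mul_expqInvCoeff_succ hq'
  have h0 : (qfact q 0)⁻¹ * expqInvCoeff q 0 = 1 := by simp [expqInvCoeff, qfact_zero]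
  have hB := Bseq_eq_qfact_smul_sandwich (α := fun i => (qfact q i)⁻¹) hα hβ h0 a b
  have hc_eq : c = ∑ j ∈ Finset.range N, expqInvCoeff q j • a ^ j :=
    left_inv_eq_right_inv hc' (sum_smul_pow_mul_sum_smul_pow_eq_one hq' hα hβ h0 hN)
  refine ⟨fun k hk => by rw [hB, sandwich_eq_zero_of_le hN b hk, smul_zero], ?_⟩
  rw [hc_eq, expq, ← sum_sandwich hN]
  exact Finset.sum_congr rfl fun k _ => by rw [hB, inv_smul_smul₀ (qfact_ne_zero hq' k)]
end

section
/- Let O = exp_{q^{-2}}((q-q^{-1})·e_1⊗f_2) in (a completion of) Osc_1 ⊗ Osc_2, where e_1⊗f_2 acts locally nilpotently. Then O·(e_2)·O^{-1} = e_2 + e_1 q^{-h_2} and O·(f_1)·O^{-1} = f_1 + f_2 q^{h_1}, while O·e_1·O^{-1} = e_1 and O·f_2·O^{-1} = f_2. (Here e_i, f_i, q^{±h_i} denote 1⊗x or x⊗1 appropriately.) -/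
namespace stmt11

/-- The model of W₁ ⊗ W₂: basis vectors `single (n,m) 1 = v⁽¹⁾ₙ ⊗ v⁽²⁾ₘ`. -/
abbrev V : Type := (ℕ × ℕ) →₀ ℂ

noncomputable def op (g : ℕ × ℕ → V) : V →ₗ[ℂ] V :=
  Finsupp.lsum ℂ fun p => LinearMap.toSpanSingleton ℂ V (g p)

/-- `e₁ ⊗ 1`. -/
noncomputable def e1 (q : ℂ) : V →ₗ[ℂ] V :=
  op fun p => Finsupp.single (p.1 - 1, p.2)
    (if p.1 = 0 then 0 else
      ((q ^ p.1 - q⁻¹ ^ p.1) / (q - q⁻¹)) * (q⁻¹ ^ p.1 * q) / (q - q⁻¹))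

/-- `f₁ ⊗ 1`. -/
noncomputable def f1 : V →ₗ[ℂ] V := op fun p => Finsupp.single (p.1 + 1, p.2) 1

/-- `1 ⊗ e₂`: `e₂ v⁽²⁾ₘ = -[m]_q q^{m-1}/(q-q⁻¹) v⁽²⁾_{m-1}`. -/
noncomputable def e2 (q : ℂ) : V →ₗ[ℂ] V :=
  op fun p => Finsupp.single (p.1, p.2 - 1)
    (if p.2 = 0 then 0 else
      -(((q ^ p.2 - q⁻¹ ^ p.2) / (q - q⁻¹)) * (q ^ p.2 * q⁻¹)) / (q - q⁻¹))

/-- `1 ⊗ f₂`. -/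
noncomputable def f2 : V →ₗ[ℂ] V := op fun p => Finsupp.single (p.1, p.2 + 1) 1

/-- `q^{h₁} ⊗ 1` (h₁ has eigenvalue `-2n`). -/
noncomputable def qh1 (q : ℂ) : V →ₗ[ℂ] V :=
  op fun p => Finsupp.single p (q⁻¹ ^ (2 * p.1))

/-- `1 ⊗ q^{-h₂}` (h₂ has eigenvalue `-2m`). -/
noncomputable def qmh2 (q : ℂ) : V →ₗ[ℂ] V :=
  op fun p => Finsupp.single p (q ^ (2 * p.2))

noncomputable def pnum (p : ℂ) (k : ℕ) : ℂ := (1 - p ^ k) / (1 - p)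
noncomputable def pfact (p : ℂ) (k : ℕ) : ℂ := ∏ i ∈ Finset.range k, pnum p (i + 1)

/-- `O = exp_{q⁻²}((q-q⁻¹)·e₁⊗f₂)` (the series is locally finite). -/
noncomputable def Oop (q : ℂ) : V →ₗ[ℂ] V :=
  op fun p => ∑ k ∈ Finset.range (p.1 + 1),
    (pfact (q⁻¹ ^ 2) k)⁻¹ • ((((q - q⁻¹) • (e1 q ∘ₗ f2)) ^ k) (Finsupp.single p 1))

end stmt11

/-! Put `X = λ e₁f₂`. It lowers the first index, so `O = ∑ₖ X^k/(k)_{q⁻²}!` is a finite sum on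
each vector and `1 - O` is locally nilpotent, which makes `O` invertible. Both `e₁` and `f₂` commute
with `X`, while `W = e₂` (resp. `f₁`) satisfies `XW = WX + Y` and `XY = q⁻²YX` for `Y = e₁q^{-h₂}`
(resp. `f₂q^{h₁}`). Then `X^{k+1}W = WX^{k+1} + (k+1)_{q⁻²} Y X^k`, and since
`(k+1)_{q⁻²}/(k+1)_{q⁻²}! = 1/(k)_{q⁻²}!`, summing over `k` gives `OW = (W+Y)O`. -/

open Finset Finsupp

theorem Finsupp.single_congr_left {α M : Type*} [Zero M] {a a' : α} {x : M}
    (h : x ≠ 0 → a = a') : single a x = single a' x := by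
  by_cases hx : x = 0
  · simp [hx]
  · rw [h hx]

section QCommutation

variable {R A : Type*} [CommSemiring R] [Semiring A] [Algebra R A] {X W Y : A} {t : R}

theorem pow_succ_mul_of_mul_eq (hc : X * W = W * X + Y) (hY : X * Y = t • (Y * X)) (k : ℕ) :
    X ^ (k + 1) * W = W * X ^ (k + 1) + (∑ i ∈ range (k + 1), t ^ i) • (Y * X ^ k) := by
  induction k with
  | zero => simpa using hc
  | succ k ih =>
    have hs : ∑ i ∈ range (k + 1 + 1), t ^ i = (∑ i ∈ range (k + 1), t ^ i) * t + 1 := by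
      rw [geom_sum_succ, mul_comm]
    calc X ^ (k + 1 + 1) * W = X * (X ^ (k + 1) * W) := by rw [← mul_assoc, ← pow_succ']
      _ = (X * W) * X ^ (k + 1) + (∑ i ∈ range (k + 1), t ^ i) • ((X * Y) * X ^ k) := by
        rw [ih, mul_add, mul_smul_comm, mul_assoc, mul_assoc]
      _ = W * X ^ (k + 1 + 1) + (∑ i ∈ range (k + 1 + 1), t ^ i) • (Y * X ^ (k + 1)) := by
        rw [hc, hY, hs, add_mul, smul_mul_assoc, smul_smul, mul_assoc, mul_assoc, ← pow_succ',
          ← pow_succ', add_smul, one_smul]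
        abel

theorem sum_smul_pow_mul_add (hc : X * W = W * X + Y) (hY : X * Y = t • (Y * X)) (d : ℕ → R)
    (hd : ∀ k, d (k + 1) * ∑ i ∈ range (k + 1), t ^ i = d k) (K : ℕ) :
    (∑ k ∈ range (K + 1), d k • X ^ k) * W + d K • (Y * X ^ K)
      = (W + Y) * ∑ k ∈ range (K + 1), d k • X ^ k := by
  induction K with
  | zero => simp
  | succ K ih =>
    rw [sum_range_succ, add_mul, mul_add, ← ih, smul_mul_assoc, pow_succ_mul_of_mul_eq hc hY,
      smul_add, smul_smul, hd, add_mul, mul_smul_comm, mul_smul_comm]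
    abel

end QCommutation

theorem bijective_one_sub_of_forall_pow_apply_eq_zero {R M : Type*} [Ring R] [AddCommGroup M]
    [Module R M] (N : Module.End R M) (hN : ∀ w, ∃ k, (N ^ k) w = 0) :
    Function.Bijective ⇑(1 - N) := by
  refine ⟨(injective_iff_map_eq_zero _).2 fun w hw => ?_, fun w => ?_⟩
  · obtain ⟨k, hk⟩ := hN w
    have hfix : N w = w := by
      rw [LinearMap.sub_apply, Module.End.one_apply, sub_eq_zero] at hw
      exact hw.symm
    have : ∀ j, (N ^ j) w = w := fun j => by
      induction j with
      | zero => rfl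
      | succ j ih => rw [pow_succ, Module.End.mul_apply, hfix, ih]
    rwa [this] at hk
  · obtain ⟨k, hk⟩ := hN w
    refine ⟨(∑ i ∈ range k, N ^ i) w, ?_⟩
    rw [← Module.End.mul_apply, mul_neg_geom_sum, LinearMap.sub_apply, hk, sub_zero,
      Module.End.one_apply]

namespace stmt11

theorem pnum_eq_geom_sum {t : ℂ} (ht : t ≠ 1) (k : ℕ) : pnum t k = ∑ i ∈ range k, t ^ i := by
  rw [geom_sum_eq ht, pnum, ← neg_div_neg_eq, neg_sub, neg_sub]

theorem inv_pfact_succ_mul_geom_sum {t : ℂ} (ht : ∀ j, j ≠ 0 → t ^ j ≠ 1) (k : ℕ) :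
    (pfact t (k + 1))⁻¹ * ∑ i ∈ range (k + 1), t ^ i = (pfact t k)⁻¹ := by
  have ht1 : t ≠ 1 := by simpa using ht 1 one_ne_zero
  have hnum : pnum t (k + 1) ≠ 0 := by
    rw [pnum]
    exact div_ne_zero (sub_ne_zero.2 (ht (k + 1) k.succ_ne_zero).symm) (sub_ne_zero.2 ht1.symm)
  rw [← pnum_eq_geom_sum ht1, pfact, prod_range_succ, ← pfact, mul_inv, mul_assoc,
    inv_mul_cancel₀ hnum, mul_one]

variable {q : ℂ}

theorem op_single (g : ℕ × ℕ → V) (p : ℕ × ℕ) (c : ℂ) : op g (single p c) = c • g p := by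
  simp [op]

theorem e1_single (hq : q ≠ 0) (n m : ℕ) (c : ℂ) :
    e1 q (single (n, m) c) = single (n - 1, m) (c * (q * (1 - q⁻¹ ^ (2 * n)) / (q - q⁻¹) ^ 2)) := by
  rw [e1, op_single, smul_single']
  congr 1
  split_ifs with hn
  · simp_all
  · have key : q ^ n * q⁻¹ ^ n = 1 := by rw [← mul_pow, mul_inv_cancel₀ hq, one_pow]
    generalize q - q⁻¹ = l
    linear_combination c * q / l ^ 2 * key

theorem f1_single (n m : ℕ) (c : ℂ) : f1 (single (n, m) c) = single (n + 1, m) c := by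
  rw [f1, op_single, smul_single', mul_one]

theorem e2_single (hq : q ≠ 0) (n m : ℕ) (c : ℂ) :
    e2 q (single (n, m) c) = single (n, m - 1) (c * (q⁻¹ * (1 - q ^ (2 * m)) / (q - q⁻¹) ^ 2)) := by
  rw [e2, op_single, smul_single']
  congr 1
  split_ifs with hm
  · simp_all
  · have key : q ^ m * q⁻¹ ^ m = 1 := by rw [← mul_pow, mul_inv_cancel₀ hq, one_pow]
    generalize q - q⁻¹ = l
    linear_combination c * q⁻¹ / l ^ 2 * key

theorem f2_single (n m : ℕ) (c : ℂ) : f2 (single (n, m) c) = single (n, m + 1) c := by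
  rw [f2, op_single, smul_single', mul_one]

theorem qh1_single (n m : ℕ) (c : ℂ) :
    qh1 q (single (n, m) c) = single (n, m) (c * q⁻¹ ^ (2 * n)) := by
  rw [qh1, op_single, smul_single']

theorem qmh2_single (n m : ℕ) (c : ℂ) :
    qmh2 q (single (n, m) c) = single (n, m) (c * q ^ (2 * m)) := by
  rw [qmh2, op_single, smul_single']

noncomputable def X (q : ℂ) : Module.End ℂ V := (q - q⁻¹) • (e1 q ∘ₗ f2)

theorem X_mul_e1 (hq : q ≠ 0) : X q * e1 q = e1 q * X q := by
  refine Finsupp.lhom_ext fun ⟨n, m⟩ c => ?_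
  simp only [X, Module.End.mul_apply, LinearMap.smul_apply, LinearMap.comp_apply, e1_single hq,
    f2_single, smul_single']
  congr 1
  ring

theorem X_mul_f2 (hq : q ≠ 0) : X q * f2 = f2 * X q := by
  refine Finsupp.lhom_ext fun ⟨n, m⟩ c => ?_
  simp only [X, Module.End.mul_apply, LinearMap.smul_apply, LinearMap.comp_apply, e1_single hq,
    f2_single, map_smul]

theorem X_mul_e2 (hq : q ≠ 0) : X q * e2 q = e2 q * X q + e1 q * qmh2 q := by
  refine Finsupp.lhom_ext fun ⟨n, m⟩ c => ?_
  simp only [X, Module.End.mul_apply, LinearMap.add_apply, LinearMap.smul_apply,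
    LinearMap.comp_apply, e1_single hq, e2_single hq, f2_single, qmh2_single, smul_single',
    Nat.add_sub_cancel, ← single_add]
  rw [single_congr_left (a' := (n - 1, m))]
  · congr 1
    field_simp
    ring
  · rcases m with _ | m <;> simp

theorem X_mul_e1_qmh2 (hq : q ≠ 0) : X q * (e1 q * qmh2 q) = q⁻¹ ^ 2 • (e1 q * qmh2 q * X q) := by
  refine Finsupp.lhom_ext fun ⟨n, m⟩ c => ?_
  simp only [X, Module.End.mul_apply, LinearMap.smul_apply,
    LinearMap.comp_apply, e1_single hq, f2_single, qmh2_single, smul_single']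
  congr 1
  field_simp
  ring

theorem X_mul_f1 (hq : q ≠ 0) (hq2 : q ^ 2 ≠ 1) : X q * f1 = f1 * X q + f2 * qh1 q := by
  refine Finsupp.lhom_ext fun ⟨n, m⟩ c => ?_
  simp only [X, Module.End.mul_apply, LinearMap.add_apply, LinearMap.smul_apply,
    LinearMap.comp_apply, e1_single hq, f1_single, f2_single, qh1_single, smul_single',
    Nat.add_sub_cancel]
  rw [single_congr_left (a := (n - 1 + 1, m + 1)) (a' := (n, m + 1)), ← single_add]
  · have : q ^ 2 - 1 ≠ 0 := sub_ne_zero.2 hq2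
    congr 1
    simp only [inv_pow]
    field_simp
    ring
  · rcases n with _ | n <;> simp

theorem X_mul_f2_qh1 (hq : q ≠ 0) : X q * (f2 * qh1 q) = q⁻¹ ^ 2 • (f2 * qh1 q * X q) := by
  refine Finsupp.lhom_ext fun ⟨n, m⟩ c => ?_
  simp only [X, Module.End.mul_apply, LinearMap.smul_apply,
    LinearMap.comp_apply, e1_single hq, f2_single, qh1_single, smul_single']
  congr 1
  rcases n with _ | n
  · simp
  · rw [Nat.add_sub_cancel]
    ring

def fil (K : ℕ) : Submodule ℂ V := supported ℂ ℂ {p : ℕ × ℕ | p.1 < K}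

theorem single_mem_fil {n K : ℕ} (h : n < K) (m : ℕ) (c : ℂ) : single (n, m) c ∈ fil K :=
  single_mem_supported ℂ c h

theorem fil_mono {K L : ℕ} (h : K ≤ L) : fil K ≤ fil L :=
  supported_mono fun _ hp => lt_of_lt_of_le hp h

theorem exists_mem_fil (w : V) : ∃ K, w ∈ fil K :=
  ⟨w.support.sup Prod.fst + 1, (mem_supported ℂ w).2 fun _ hp => Nat.lt_succ_of_le (le_sup hp)⟩

theorem fil_le_comap {f : Module.End ℂ V} {K L : ℕ}
    (h : ∀ n m, n < K → f (single (n, m) 1) ∈ fil L) : fil K ≤ (fil L).comap f := by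
  rw [fil, supported_eq_span_single, Submodule.span_le]
  rintro _ ⟨⟨n, m⟩, hn, rfl⟩
  exact h n m hn

theorem eqOn_fil {f g : Module.End ℂ V} {K : ℕ}
    (h : ∀ n m, n < K → f (single (n, m) 1) = g (single (n, m) 1)) {w : V} (hw : w ∈ fil K) :
    f w = g w := by
  rw [fil, supported_eq_span_single] at hw
  refine LinearMap.eqOn_span ?_ hw
  rintro _ ⟨⟨n, m⟩, hn, rfl⟩
  exact h n m hn

theorem pow_apply_eq_zero_of_lowering {f : Module.End ℂ V}
    (hf : ∀ K w, w ∈ fil (K + 1) → f w ∈ fil K) {K : ℕ} {w : V} (hw : w ∈ fil K) :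
    (f ^ K) w = 0 := by
  induction K generalizing w with
  | zero => simpa [fil] using hw
  | succ K ih => rw [pow_succ, Module.End.mul_apply, ih (hf K w hw)]

theorem X_mem_fil (hq : q ≠ 0) {K : ℕ} {w : V} (hw : w ∈ fil (K + 1)) : X q w ∈ fil K := by
  refine fil_le_comap (fun n m hn => ?_) hw
  simp only [X, LinearMap.smul_apply, LinearMap.comp_apply, f2_single, e1_single hq]
  rcases n with _ | n
  · simp
  · exact Submodule.smul_mem _ _ (single_mem_fil (by omega) _ _)

theorem X_pow_mem_fil (hq : q ≠ 0) {K : ℕ} {w : V} (hw : w ∈ fil K) (k : ℕ) :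
    (X q ^ k) w ∈ fil K := by
  induction k with
  | zero => exact hw
  | succ k ih => rw [pow_succ', Module.End.mul_apply]; exact X_mem_fil hq (fil_mono K.le_succ ih)

noncomputable def truncOop (q : ℂ) (K : ℕ) : Module.End ℂ V :=
  ∑ k ∈ range K, (pfact (q⁻¹ ^ 2) k)⁻¹ • X q ^ k

theorem Oop_apply_of_mem_fil (hq : q ≠ 0) {K : ℕ} {w : V} (hw : w ∈ fil K) :
    Oop q w = truncOop q K w := by
  refine eqOn_fil (fun n m hn => ?_) hw
  rw [Oop, op_single, one_smul, truncOop, LinearMap.sum_apply]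
  refine sum_subset (range_subset_range.2 hn) fun k _ hk => ?_
  have hv : single (n, m) (1 : ℂ) ∈ fil k :=
    single_mem_fil (by simp only [mem_range] at hk; omega) _ _
  change _ • (X q ^ k) _ = 0
  rw [pow_apply_eq_zero_of_lowering (fun _ _ => X_mem_fil hq) hv, smul_zero]

theorem one_sub_Oop_mem_fil (hq : q ≠ 0) {K : ℕ} {w : V} (hw : w ∈ fil (K + 1)) :
    (1 - Oop q) w ∈ fil K := by
  rw [LinearMap.sub_apply, Module.End.one_apply, Oop_apply_of_mem_fil hq hw, truncOop,
    sum_range_succ', LinearMap.add_apply, LinearMap.sum_apply]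
  simp only [pfact, range_zero, prod_empty, inv_one, pow_zero, one_smul, Module.End.one_apply,
    sub_add_cancel_right]
  refine neg_mem (sum_mem fun k _ => Submodule.smul_mem _ _ ?_)
  rw [pow_succ, Module.End.mul_apply]
  exact X_pow_mem_fil hq (X_mem_fil hq hw) k

theorem Oop_bijective (hq : q ≠ 0) : Function.Bijective (Oop q) := by
  have h := bijective_one_sub_of_forall_pow_apply_eq_zero (1 - Oop q) fun w => by
    obtain ⟨K, hw⟩ := exists_mem_fil w
    exact ⟨K, pow_apply_eq_zero_of_lowering (fun _ _ => one_sub_Oop_mem_fil hq) hw⟩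
  convert h
  exact (sub_sub_cancel (1 : Module.End ℂ V) (Oop q)).symm

/-- Both `v = single (n, m) c` and `W v` lie in `fil (n + 2)`, where `O` is the truncated sum
`truncOop q (n + 2)`; the extra term of `sum_smul_pow_mul_add` vanishes on `v` as `X^(n+1) v = 0`. -/
theorem Oop_comp_eq_of_mul_eq (hq : q ≠ 0) (hroot : ∀ n : ℕ, n ≠ 0 → q ^ n ≠ 1)
    {W Y : Module.End ℂ V} (hc : X q * W = W * X q + Y) (hY : X q * Y = q⁻¹ ^ 2 • (Y * X q))
    (hW : ∀ n m c, W (single (n, m) c) ∈ fil (n + 2)) :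
    Oop q ∘ₗ W = (W + Y) ∘ₗ Oop q := by
  have ht : ∀ j, j ≠ 0 → (q⁻¹ ^ 2) ^ j ≠ 1 := fun j hj => by
    rw [← pow_mul, inv_pow, Ne, inv_eq_one]
    exact hroot _ (by omega)
  refine Finsupp.lhom_ext fun ⟨n, m⟩ c => ?_
  have hv : single (n, m) c ∈ fil (n + 1) := single_mem_fil n.lt_succ_self m c
  have hd := inv_pfact_succ_mul_geom_sum ht
  have key := sum_smul_pow_mul_add hc hY (fun k => (pfact (q⁻¹ ^ 2) k)⁻¹) hd (n + 1)
  replace key := DFunLike.congr_fun key (single (n, m) c)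
  rw [LinearMap.add_apply, Module.End.mul_apply, Module.End.mul_apply, LinearMap.smul_apply,
    Module.End.mul_apply, pow_apply_eq_zero_of_lowering (fun _ _ => X_mem_fil hq) hv, map_zero,
    smul_zero, add_zero] at key
  rw [LinearMap.comp_apply, LinearMap.comp_apply, Oop_apply_of_mem_fil hq (hW n m c),
    Oop_apply_of_mem_fil hq (fil_mono (n + 1).le_succ hv)]
  exact key

end stmt11

/-- `O` is invertible on W₁⊗W₂ and
`O e₂ O⁻¹ = e₂ + e₁ q^{-h₂}`, `O f₁ O⁻¹ = f₁ + f₂ q^{h₁}`,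
`O e₁ O⁻¹ = e₁`, `O f₂ O⁻¹ = f₂`. -/
theorem stmt11 (q : ℂ) (hq : q ≠ 0) (hroot : ∀ n : ℕ, n ≠ 0 → q ^ n ≠ 1) :
    ∃ Oinv : stmt11.V →ₗ[ℂ] stmt11.V,
      stmt11.Oop q ∘ₗ Oinv = LinearMap.id ∧ Oinv ∘ₗ stmt11.Oop q = LinearMap.id ∧
      stmt11.Oop q ∘ₗ stmt11.e2 q ∘ₗ Oinv
        = stmt11.e2 q + stmt11.e1 q ∘ₗ stmt11.qmh2 q ∧
      stmt11.Oop q ∘ₗ stmt11.f1 ∘ₗ Oinv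
        = stmt11.f1 + stmt11.f2 ∘ₗ stmt11.qh1 q ∧
      stmt11.Oop q ∘ₗ stmt11.e1 q ∘ₗ Oinv = stmt11.e1 q ∧
      stmt11.Oop q ∘ₗ stmt11.f2 ∘ₗ Oinv = stmt11.f2 := by
  open stmt11 in
  let O := LinearEquiv.ofBijective (Oop q) (Oop_bijective hq)
  have hO : (O : V →ₗ[ℂ] V) = Oop q := LinearMap.ext fun _ => rfl
  have conj {W W' : Module.End ℂ V} (h : Oop q ∘ₗ W = W' ∘ₗ Oop q) :
      Oop q ∘ₗ W ∘ₗ O.symm = W' := by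
    rw [← LinearMap.comp_assoc, h, LinearMap.comp_assoc, ← hO, O.comp_symm, LinearMap.comp_id]
  have hcomm {W : Module.End ℂ V} (h : X q * W = W * X q)
      (hW : ∀ n m c, W (single (n, m) c) ∈ fil (n + 2)) : Oop q ∘ₗ W = W ∘ₗ Oop q := by
    simpa using Oop_comp_eq_of_mul_eq hq hroot (Y := 0) (by rw [add_zero, h]) (by simp) hW
  refine ⟨O.symm, hO ▸ O.comp_symm, hO ▸ O.symm_comp,
    conj (Oop_comp_eq_of_mul_eq hq hroot (X_mul_e2 hq) (X_mul_e1_qmh2 hq) fun n m c => ?_),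
    conj (Oop_comp_eq_of_mul_eq hq hroot (X_mul_f1 hq (hroot 2 two_ne_zero)) (X_mul_f2_qh1 hq)
      fun n m c => ?_),
    conj (hcomm (X_mul_e1 hq) fun n m c => ?_), conj (hcomm (X_mul_f2 hq) fun n m c => ?_)⟩
  · rw [e2_single hq]; exact single_mem_fil (by omega) _ _
  · rw [f1_single]; exact single_mem_fil (by omega) _ _
  · rw [e1_single hq]; exact single_mem_fil (by omega) _ _
  · rw [f2_single]; exact single_mem_fil (by omega) _ _
end
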